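/- arXiv:math/0209174 — 3 statements merged into one kernel-verified Lean document; each statement's English description precedes it below -/
import Mathlib

section
/- Let R be a commutative Noetherian ring of prime characteristic p, let I be an ideal of R, and let U be a multiplicative set in R. Then the extension of the tight closure of I to the localization is contained in the tight closure of the extended ideal: I*·R[U⁻¹] ⊆ (I·R[U⁻¹])*. -/
/-- The `q`-th Frobenius power `I^{[q]}` of an ideal `I`: the ideal generated by
`q`-th powers of elements of `I`. -/
def Ideal.frobeniusPower {R : Type*} [CommRing R] (I : Ideal R) (q : ℕ) : Ideal R :=
  Ideal.span ((fun x => x ^ q) '' (I : Set R))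

/-- `R°`: the set of elements of `R` not contained in any minimal prime of `R`. -/
def primeComplement (R : Type*) [CommRing R] : Set R :=
  { c | ∀ P ∈ minimalPrimes R, c ∉ P }

/-- The tight closure `I*` of an ideal `I` in a ring of characteristic `p`:
elements `z` such that `c * z ^ (p ^ e) ∈ I ^ [p ^ e]` for some `c ∈ R°`
and all sufficiently large `e`. -/
def tightClosure (p : ℕ) {R : Type*} [CommRing R] (I : Ideal R) : Set R :=
  { z | ∃ c ∈ primeComplement R, ∃ N : ℕ, ∀ e : ℕ, N ≤ e →
      c * z ^ p ^ e ∈ I.frobeniusPower (p ^ e) }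

/-- Tight closure commutes with localization in `R`: for every ideal `I` and
multiplicative set `U`, `I* · R[U⁻¹] = (I · R[U⁻¹])*`. -/
def TightClosureCommutesWithLocalization (p : ℕ) (R : Type*) [CommRing R] : Prop :=
  ∀ (I : Ideal R) (U : Submonoid R),
    (Ideal.map (algebraMap R (Localization U)) (Ideal.span (tightClosure p I)) :
        Set (Localization U))
      = tightClosure p (Ideal.map (algebraMap R (Localization U)) I)

/-- A ring is F-regular if every ideal is tightly closed, both in the ring itself
and in all of its localizations. -/
def FRegular (p : ℕ) (S : Type*) [CommRing S] : Prop :=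
  (∀ I : Ideal S, tightClosure p I = (I : Set S)) ∧
    ∀ (U : Submonoid S) (J : Ideal (Localization U)),
      tightClosure p J = (J : Set (Localization U))

/-!
The tight closure of an ideal in a ring in which the prime `p` vanishes is again an ideal:
closure under sums comes from additivity of Frobenius, `(a + b)^q = a^q + b^q`. A ring map
carries `I*` into `(I S)*` as soon as it carries `R°` into `S°`, applying it to the witnessing
relations `c z^q ∈ I^{[q]}`. For a localization this holds because the minimal primes of
`R[U⁻¹]` are exactly those whose contraction is a minimal prime of `R`.
-/

lemma Ideal.pow_mem_frobeniusPower {R : Type*} [CommRing R] {I : Ideal R} {x : R} (hx : x ∈ I)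
    (q : ℕ) : x ^ q ∈ I.frobeniusPower q :=
  Ideal.subset_span ⟨x, hx, rfl⟩

lemma Ideal.map_frobeniusPower_le {R S : Type*} [CommRing R] [CommRing S] (f : R →+* S)
    (I : Ideal R) (q : ℕ) : (I.frobeniusPower q).map f ≤ (I.map f).frobeniusPower q := by
  rw [Ideal.frobeniusPower, Ideal.map_span, Ideal.span_le]
  rintro _ ⟨_, ⟨x, hx, rfl⟩, rfl⟩
  rw [map_pow]
  exact Ideal.pow_mem_frobeniusPower (Ideal.mem_map_of_mem f hx) q

lemma one_mem_primeComplement (R : Type*) [CommRing R] : (1 : R) ∈ primeComplement R :=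
  fun _ hP h1 => hP.1.1.ne_top ((Ideal.eq_top_iff_one _).2 h1)

lemma mul_mem_primeComplement {R : Type*} [CommRing R] {c d : R}
    (hc : c ∈ primeComplement R) (hd : d ∈ primeComplement R) : c * d ∈ primeComplement R :=
  fun P hP hcd => (hP.1.1.mem_or_mem hcd).elim (hc P hP) (hd P hP)

lemma IsLocalization.algebraMap_mem_primeComplement {R : Type*} [CommRing R] (M : Submonoid R)
    (S : Type*) [CommRing S] [Algebra R S] [IsLocalization M S] {c : R}
    (hc : c ∈ primeComplement R) : algebraMap R S c ∈ primeComplement S := by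
  intro Q hQ hcQ
  have hmin := IsLocalization.minimalPrimes_map M S (⊥ : Ideal R)
  rw [Ideal.map_bot] at hmin
  exact hc _ (show Q ∈ Ideal.under R ⁻¹' minimalPrimes R from hmin ▸ hQ) hcQ

lemma map_mem_tightClosure_map (p : ℕ) {R S : Type*} [CommRing R] [CommRing S] (f : R →+* S)
    (hf : ∀ c ∈ primeComplement R, f c ∈ primeComplement S) (I : Ideal R) {z : R}
    (hz : z ∈ tightClosure p I) : f z ∈ tightClosure p (I.map f) := by
  obtain ⟨c, hc, N, hN⟩ := hz
  refine ⟨f c, hf c hc, N, fun e he => ?_⟩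
  rw [← map_pow, ← map_mul]
  exact Ideal.map_frobeniusPower_le f I _ (Ideal.mem_map_of_mem f (hN e he))

section TightClosureIdeal

variable {p : ℕ} {S : Type*} [CommRing S] {J : Ideal S}

lemma add_pow_prime_pow_of_natCast_eq_zero (hp : p.Prime) (hpS : (p : S) = 0) (a b : S)
    (e : ℕ) : (a + b) ^ p ^ e = a ^ p ^ e + b ^ p ^ e := by
  nontriviality S
  have : Fact p.Prime := ⟨hp⟩
  have : CharP S p := (CharP.charP_iff_prime_eq_zero hp).2 hpS
  exact add_pow_char_pow a b p e

lemma zero_mem_tightClosure (hp : p ≠ 0) : (0 : S) ∈ tightClosure p J := by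
  refine ⟨1, one_mem_primeComplement S, 0, fun e _ => ?_⟩
  rw [zero_pow (pow_ne_zero e hp), mul_zero]
  exact Ideal.zero_mem _

lemma add_mem_tightClosure (hp : p.Prime) (hpS : (p : S) = 0) {a b : S}
    (ha : a ∈ tightClosure p J) (hb : b ∈ tightClosure p J) : a + b ∈ tightClosure p J := by
  obtain ⟨c, hc, N, hN⟩ := ha
  obtain ⟨d, hd, M, hM⟩ := hb
  refine ⟨c * d, mul_mem_primeComplement hc hd, max N M, fun e he => ?_⟩
  have hcd : c * d * (a + b) ^ p ^ e = d * (c * a ^ p ^ e) + c * (d * b ^ p ^ e) := by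
    rw [add_pow_prime_pow_of_natCast_eq_zero hp hpS]
    ring
  rw [hcd]
  exact Ideal.add_mem _ (Ideal.mul_mem_left _ _ (hN e (le_of_max_le_left he)))
    (Ideal.mul_mem_left _ _ (hM e (le_of_max_le_right he)))

lemma mul_mem_tightClosure (a : S) {y : S} (hy : y ∈ tightClosure p J) :
    a * y ∈ tightClosure p J := by
  obtain ⟨c, hc, N, hN⟩ := hy
  refine ⟨c, hc, N, fun e he => ?_⟩
  rw [mul_pow, mul_left_comm]
  exact Ideal.mul_mem_left _ _ (hN e he)

variable (J)

def tightClosureIdeal (hp : p.Prime) (hpS : (p : S) = 0) : Ideal S where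
  carrier := tightClosure p J
  zero_mem' := zero_mem_tightClosure hp.ne_zero
  add_mem' := add_mem_tightClosure hp hpS
  smul_mem' := mul_mem_tightClosure

end TightClosureIdeal

theorem tightClosure_map_subset_tightClosure_of_map_general
    (p : ℕ) [Fact p.Prime] (R : Type) [CommRing R] [CharP R p]
    (I : Ideal R) (U : Submonoid R) :
    (Ideal.map (algebraMap R (Localization U)) (Ideal.span (tightClosure p I)) :
        Set (Localization U))
      ⊆ tightClosure p (Ideal.map (algebraMap R (Localization U)) I) := by
  have hpS : (p : Localization U) = 0 := by
    rw [← map_natCast (algebraMap R _), CharP.cast_eq_zero, map_zero]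
  rw [Ideal.map_span]
  refine (Ideal.span_le (I := tightClosureIdeal _ Fact.out hpS)).2 ?_
  rintro _ ⟨z, hz, rfl⟩
  exact map_mem_tightClosure_map p _
    (fun _ => IsLocalization.algebraMap_mem_primeComplement U _) I hz

/-- The easy inclusion: `I* · R[U⁻¹] ⊆ (I · R[U⁻¹])*`. -/
theorem tightClosure_map_subset_tightClosure_of_map
    (p : ℕ) [Fact p.Prime] (R : Type) [CommRing R] [IsNoetherianRing R] [CharP R p]
    (I : Ideal R) (U : Submonoid R) :
    (Ideal.map (algebraMap R (Localization U)) (Ideal.span (tightClosure p I)) :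
        Set (Localization U))
      ⊆ tightClosure p (Ideal.map (algebraMap R (Localization U)) I) :=
  tightClosure_map_subset_tightClosure_of_map_general p R I U
end

section
/- Let R be a commutative Noetherian ring of prime characteristic p, let I be an ideal of R, and let z ∈ R. If the image of z in R/P lies in (I·(R/P))* for every minimal prime P of R, then z ∈ I*. -/
open Filter

namespace Ideal

variable {R S : Type*} [CommRing R] [CommRing S]

theorem frobeniusPower_eq_map_iterateFrobenius (p : ℕ) [ExpChar R p] (I : Ideal R) (e : ℕ) :
    I.frobeniusPower (p ^ e) = I.map (iterateFrobenius R p e) :=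
  rfl

theorem pow_mem_frobeniusPower_add (p : ℕ) [ExpChar R p] {I : Ideal R} {e : ℕ} {a : R}
    (ha : a ∈ I.frobeniusPower (p ^ e)) (k : ℕ) :
    a ^ p ^ k ∈ I.frobeniusPower (p ^ (e + k)) := by
  rw [frobeniusPower_eq_map_iterateFrobenius] at ha ⊢
  rw [add_comm, iterateFrobenius_add, ← map_map]
  exact mem_map_of_mem _ ha

theorem map_frobeniusPower (p : ℕ) [ExpChar R p] [ExpChar S p] (f : R →+* S) (I : Ideal R)
    (e : ℕ) : (I.frobeniusPower (p ^ e)).map f = (I.map f).frobeniusPower (p ^ e) := by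
  simp only [frobeniusPower_eq_map_iterateFrobenius, map_map, f.iterateFrobenius_comm]

theorem exists_notMem_forall_mem_of_mem_minimalPrimes (hfin : (minimalPrimes R).Finite)
    {P : Ideal R} (hP : P ∈ minimalPrimes R) :
    ∃ u ∉ P, ∀ Q ∈ minimalPrimes R, Q ≠ P → u ∈ Q := by
  classical
  have hinf : ¬(hfin.toFinset.erase P).inf id ≤ P := by
    rw [hP.1.1.inf_le']
    rintro ⟨Q, hQ, hQP⟩
    rw [Finset.mem_erase, Set.Finite.mem_toFinset] at hQ
    exact hQ.1 (le_antisymm hQP (hP.2 hQ.2.1 hQP))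
  obtain ⟨u, hu, huP⟩ := SetLike.not_le_iff_exists.mp hinf
  exact ⟨u, huP, fun Q hQ hQP =>
    Finset.inf_le (f := id) (Finset.mem_erase.mpr ⟨hQP, hfin.mem_toFinset.mpr hQ⟩) hu⟩

theorem mul_mem_sup_nilradical_of_mem_sup {P J : Ideal R} {u y : R}
    (hu : ∀ Q ∈ minimalPrimes R, Q ≠ P → u ∈ Q) (hy : y ∈ J ⊔ P) :
    u * y ∈ J ⊔ nilradical R := by
  obtain ⟨a, ha, b, hb, rfl⟩ := Submodule.mem_sup.mp hy
  rw [mul_add]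
  refine Submodule.add_mem_sup (J.mul_mem_left u ha) ?_
  rw [nilradical, ← sInf_minimalPrimes, Submodule.mem_sInf]
  intro Q hQ
  by_cases hQP : Q = P
  · exact hQP ▸ Ideal.mul_mem_left _ u hb
  · exact Ideal.mul_mem_right b _ (hu Q hQ hQP)

end Ideal

section TightClosure

variable {R : Type*} [CommRing R]

theorem mem_tightClosure_iff_eventually (p : ℕ) {I : Ideal R} {z : R} :
    z ∈ tightClosure p I ↔ ∃ c ∈ primeComplement R,
      ∀ᶠ e in atTop, c * z ^ p ^ e ∈ I.frobeniusPower (p ^ e) := by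
  simp only [tightClosure, Set.mem_ofPred_eq, eventually_atTop]

theorem pow_mem_primeComplement {c : R} (hc : c ∈ primeComplement R) (n : ℕ) :
    c ^ n ∈ primeComplement R :=
  fun P hP hcn => hc P hP (hP.1.1.mem_of_pow_mem n hcn)

theorem ne_zero_of_mem_primeComplement [IsDomain R] {c : R} (hc : c ∈ primeComplement R) :
    c ≠ 0 :=
  fun h => hc ⊥ (by simp [IsDomain.minimalPrimes_eq_singleton_bot]) (h ▸ Submodule.zero_mem ⊥)

theorem exists_notMem_eventually_mem_sup_of_mem_tightClosure_quotient (p : ℕ) [Fact p.Prime]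
    [CharP R p] {P : Ideal R} [P.IsPrime] {I : Ideal R} {z : R}
    (h : Ideal.Quotient.mk P z ∈ tightClosure p (I.map (Ideal.Quotient.mk P))) :
    ∃ d ∉ P, ∀ᶠ e in atTop, d * z ^ p ^ e ∈ I.frobeniusPower (p ^ e) ⊔ P := by
  have : CharP (R ⧸ P) p := (CharP.charP_iff_prime_eq_zero Fact.out).mpr <| by
    rw [← map_natCast (Ideal.Quotient.mk P), CharP.cast_eq_zero, map_zero]
  obtain ⟨c, hc, hcz⟩ := (mem_tightClosure_iff_eventually p).mp h
  obtain ⟨d, rfl⟩ := Ideal.Quotient.mk_surjective c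
  refine ⟨d, fun hd => ne_zero_of_mem_primeComplement hc (Ideal.Quotient.eq_zero_iff_mem.mpr hd),
    hcz.mono fun e he => ?_⟩
  rwa [← Ideal.mem_quotient_iff_mem_sup, map_mul, map_pow, Ideal.map_frobeniusPower]

theorem exists_mem_primeComplement_eventually_mem_sup_nilradical [IsNoetherianRing R]
    {ι : Type*} {l : Filter ι} {x : ι → R} {J : ι → Ideal R}
    (h : ∀ P ∈ minimalPrimes R, ∃ d ∉ P, ∀ᶠ i in l, d * x i ∈ J i ⊔ P) :
    ∃ c ∈ primeComplement R, ∀ᶠ i in l, c * x i ∈ J i ⊔ nilradical R := by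
  classical
  have hfin := minimalPrimes.finite_of_isNoetherianRing R
  have : Fintype (minimalPrimes R) := hfin.fintype
  choose d hdP hdx using fun P : minimalPrimes R => h P P.2
  choose u huP huQ using fun P : minimalPrimes R =>
    Ideal.exists_notMem_forall_mem_of_mem_minimalPrimes hfin P.2
  refine ⟨∑ P, u P * d P, fun P₀ hP₀ hmem => ?_, ?_⟩
  · have hprime : P₀.IsPrime := hP₀.1.1
    let Q₀ : minimalPrimes R := ⟨P₀, hP₀⟩
    rw [Fintype.sum_eq_add_sum_compl Q₀] at hmem
    have hrest : ∑ Q ∈ {Q₀}ᶜ, u Q * d Q ∈ P₀ := Ideal.sum_mem _ fun Q hQ =>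
      P₀.mul_mem_right _ <| huQ Q P₀ hP₀ fun hQ₀ =>
        Finset.mem_compl.mp hQ (Finset.mem_singleton.mpr (Subtype.ext hQ₀.symm))
    rcases hprime.mem_or_mem ((P₀.add_mem_iff_left hrest).mp hmem) with hu | hd
    · exact huP Q₀ hu
    · exact hdP Q₀ hd
  · filter_upwards [eventually_all.mpr hdx] with i hi
    rw [Finset.sum_mul]
    exact Ideal.sum_mem _ fun P _ => mul_assoc (u P) (d P) (x i) ▸
      Ideal.mul_mem_sup_nilradical_of_mem_sup (huQ P) (hi P)

theorem exists_pow_mem_frobeniusPower_of_mem_sup_nilradical [IsNoetherianRing R] (p : ℕ)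
    [Fact p.Prime] [CharP R p] (I : Ideal R) :
    ∃ k, ∀ e : ℕ, ∀ x ∈ I.frobeniusPower (p ^ e) ⊔ nilradical R,
      x ^ p ^ k ∈ I.frobeniusPower (p ^ (e + k)) := by
  obtain ⟨k, hk⟩ := IsNoetherianRing.isNilpotent_nilradical R
  have hnil : ∀ n ∈ nilradical R, n ^ p ^ k = 0 := fun n hn =>
    pow_eq_zero_of_le (Nat.lt_pow_self (Fact.out : p.Prime).one_lt).le <| by
      simpa [hk] using Ideal.pow_mem_pow hn k
  refine ⟨k, fun e x hx => ?_⟩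
  obtain ⟨a, ha, n, hn, rfl⟩ := Submodule.mem_sup.mp hx
  rw [add_pow_char_pow, hnil n hn, add_zero]
  exact Ideal.pow_mem_frobeniusPower_add p ha k

theorem mem_tightClosure_of_eventually_mem_sup_nilradical [IsNoetherianRing R] (p : ℕ)
    [Fact p.Prime] [CharP R p] {I : Ideal R} {z c : R} (hc : c ∈ primeComplement R)
    (h : ∀ᶠ e in atTop, c * z ^ p ^ e ∈ I.frobeniusPower (p ^ e) ⊔ nilradical R) :
    z ∈ tightClosure p I := by
  obtain ⟨k, hk⟩ := exists_pow_mem_frobeniusPower_of_mem_sup_nilradical p I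
  refine (mem_tightClosure_iff_eventually p).mpr ⟨c ^ p ^ k, pow_mem_primeComplement hc _, ?_⟩
  filter_upwards [(tendsto_sub_atTop_nat k).eventually h, eventually_ge_atTop k] with e he hke
  obtain ⟨e, rfl⟩ := Nat.exists_eq_add_of_le' hke
  rw [Nat.add_sub_cancel] at he
  have hpow : c ^ p ^ k * z ^ p ^ (e + k) = (c * z ^ p ^ e) ^ p ^ k := by
    rw [mul_pow, ← pow_mul, ← pow_add]
  rw [hpow]
  exact hk e _ he

end TightClosure

/-- If the image of `z` lies in `(I·(R/P))*` for every minimal prime `P` of `R`,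
then `z ∈ I*`. -/
theorem mem_tightClosure_of_mem_tightClosure_quotients
    (p : ℕ) [Fact p.Prime] (R : Type) [CommRing R] [IsNoetherianRing R] [CharP R p]
    (I : Ideal R) (z : R)
    (hz : ∀ P ∈ minimalPrimes R,
      Ideal.Quotient.mk P z ∈ tightClosure p (I.map (Ideal.Quotient.mk P))) :
    z ∈ tightClosure p I := by
  obtain ⟨c, hc, hcz⟩ := exists_mem_primeComplement_eventually_mem_sup_nilradical fun P hP =>
    have : P.IsPrime := hP.1.1
    exists_notMem_eventually_mem_sup_of_mem_tightClosure_quotient p (hz P hP)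
  exact mem_tightClosure_of_eventually_mem_sup_nilradical p hc hcz
end

section
/- Let R ⊆ S be an extension of commutative Noetherian rings of prime characteristic p such that R is a direct summand of S as an R-module (i.e., the inclusion R → S splits as a map of R-modules). If S is F-regular, then R is F-regular. -/
/-!
Let `φ : S → R` be an `R`-linear retraction and `z ∈ I*` in `R`, witnessed by `c ∈ R°`. The image
of `c` in `S` may lie in minimal primes of `S`, so it cannot witness a tight closure membership
there. But if all ideals of the Noetherian ring `S` are tightly closed, the minimal primes
containing `c` are cut out by an idempotent: choosing `x` with `c x = 0` and `c + x ∈ S°`, one has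
`c ∈ (c + x)* = (c + x)`, and writing `c = s (c + x)` makes `f = 1 - s` idempotent with `c f = 0`
and `c + f ∈ S°`. Using `c + f` as witness gives `z ∈ (IS + fS)* = IS + fS`. Finally `φ` maps `IS`
into `I` and kills `fS`, because `c φ(t f) = φ(t f c) = 0` and `c` is a nonzerodivisor of the
reduced ring `R`; hence `z ∈ I`. Localizing `φ` gives retractions `S_U → R_U`, which handles the
localizations of `R`.
-/

def WeaklyFRegular (p : ℕ) (T : Type*) [CommRing T] : Prop :=
  ∀ J : Ideal T, tightClosure p J = (J : Set T)

namespace Ideal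

variable {T : Type*} [CommRing T]

theorem pow_mem_frobeniusPower_s12 {I : Ideal T} {x : T} (hx : x ∈ I) (q : ℕ) :
    x ^ q ∈ I.frobeniusPower q :=
  subset_span ⟨x, hx, rfl⟩

theorem frobeniusPower_mono {I J : Ideal T} (h : I ≤ J) (q : ℕ) :
    I.frobeniusPower q ≤ J.frobeniusPower q :=
  span_mono (Set.image_mono h)

theorem map_frobeniusPower_le_s12 {A : Type*} [CommRing A] (f : A →+* T) (I : Ideal A) (q : ℕ) :
    (I.frobeniusPower q).map f ≤ (I.map f).frobeniusPower q := by
  rw [frobeniusPower, map_span, span_le]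
  rintro _ ⟨_, ⟨x, hx, rfl⟩, rfl⟩
  rw [map_pow]
  exact pow_mem_frobeniusPower_s12 (mem_map_of_mem f hx) q

end Ideal

section PrimeComplement

variable {T : Type*} [CommRing T]

theorem one_mem_primeComplement_s12 : (1 : T) ∈ primeComplement T :=
  fun _ hP h1 => hP.1.1.ne_top ((Ideal.eq_top_iff_one _).2 h1)

theorem eq_zero_of_forall_mem_minimalPrimes [IsReduced T] {x : T}
    (h : ∀ Q ∈ minimalPrimes T, x ∈ Q) : x = 0 := by
  have hx : x ∈ sInf (minimalPrimes T) := Submodule.mem_sInf.2 h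
  rwa [minimalPrimes, Ideal.sInf_minimalPrimes, Ideal.radical_bot_of_isReduced] at hx

theorem primeComplement_subset_nonZeroDivisors [IsReduced T] :
    primeComplement T ⊆ nonZeroDivisors T := by
  refine fun c hc => mem_nonZeroDivisors_iff_right.2 fun x hx =>
    eq_zero_of_forall_mem_minimalPrimes fun Q hQ => ?_
  exact (hQ.1.1.mem_or_mem (hx ▸ Q.zero_mem)).resolve_right (hc Q hQ)

theorem exists_forall_mem_minimalPrimes_iff_notMem [IsNoetherianRing T] (c : T) :
    ∃ x, ∀ Q ∈ minimalPrimes T, x ∈ Q ↔ c ∉ Q := by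
  classical
  set M := (minimalPrimes.finite_of_isNoetherianRing T).toFinset
  have hM {Q : Ideal T} {P : Ideal T → Prop} [DecidablePred P] :
      Q ∈ M.filter P ↔ Q ∈ minimalPrimes T ∧ P Q := by
    simp [M]
  -- `x` is found by prime avoidance in the intersection of the minimal primes avoiding `c`
  set a := (M.filter (c ∉ ·)).inf id
  have ha : ∀ Q ∈ M.filter (c ∈ ·), ¬ a ≤ Q := by
    intro Q hQ hle
    rw [hM] at hQ
    obtain ⟨Q', hQ', hQ'Q⟩ := (hQ.1.1.1.inf_le').1 hle
    rw [hM] at hQ'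
    have hQQ' : Q' = Q := hQ'Q.antisymm (hQ.1.2 hQ'.1.1 hQ'Q)
    exact hQ'.2 (hQQ' ▸ hQ.2)
  obtain ⟨x, hxa, hx⟩ : ∃ x ∈ a, ∀ Q ∈ M.filter (c ∈ ·), x ∉ Q := by
    by_contra! h
    obtain ⟨Q, hQ, hle⟩ := (Ideal.subset_union_prime (f := id) ⊥ ⊥
      fun Q hQ _ _ => (hM.1 hQ).1.1.1).1 fun y hy => by simpa using h y hy
    exact ha Q hQ hle
  refine ⟨x, fun Q hQ => ⟨fun hxQ hcQ => hx Q (hM.2 ⟨hQ, hcQ⟩) hxQ, fun hcQ => ?_⟩⟩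
  exact SetLike.le_def.1 (Finset.inf_le (f := id) (hM.2 ⟨hQ, hcQ⟩)) hxa

theorem exists_mul_eq_zero_add_mem_primeComplement [IsReduced T] [IsNoetherianRing T] (c : T) :
    ∃ x, c * x = 0 ∧ c + x ∈ primeComplement T := by
  obtain ⟨x, hx⟩ := exists_forall_mem_minimalPrimes_iff_notMem c
  refine ⟨x, eq_zero_of_forall_mem_minimalPrimes fun Q hQ => ?_, fun Q hQ hcx => ?_⟩
  · by_cases hcQ : c ∈ Q
    · exact Q.mul_mem_right x hcQ
    · exact Q.mul_mem_left c ((hx Q hQ).2 hcQ)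
  · by_cases hcQ : c ∈ Q
    · exact (hx Q hQ).1 (by simpa using Q.sub_mem hcx hcQ) hcQ
    · exact hcQ (by simpa using Q.sub_mem hcx ((hx Q hQ).2 hcQ))

end PrimeComplement

section TightClosure

variable (p : ℕ) {T : Type*} [CommRing T]

theorem subset_tightClosure (I : Ideal T) : (I : Set T) ⊆ tightClosure p I :=
  fun _ hz => ⟨1, one_mem_primeComplement_s12, 0, fun _ _ => by
    rw [one_mul]; exact Ideal.pow_mem_frobeniusPower_s12 hz _⟩

variable [Fact p.Prime]

theorem mem_tightClosure_span_add {c x : T} (hcx : c * x = 0)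
    (h : c + x ∈ primeComplement T) : c ∈ tightClosure p (Ideal.span {c + x}) := by
  refine ⟨c + x, h, 0, fun e _ => ?_⟩
  have hc (n : ℕ) : c * (c + x) ^ n = c ^ (n + 1) := by
    induction n with
    | zero => simp
    | succ n ih => linear_combination (c + x) * ih + c ^ n * hcx
  obtain ⟨k, hk⟩ :=
    Nat.exists_eq_add_one_of_ne_zero (pow_ne_zero e (Fact.out : p.Prime).ne_zero)
  have hwit : (c + x) * c ^ p ^ e = c * (c + x) ^ p ^ e := by
    rw [hk]
    linear_combination -hc (k + 1) + c ^ k * hcx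
  rw [hwit]
  exact Ideal.mul_mem_left _ c (Ideal.pow_mem_frobeniusPower_s12 (Ideal.mem_span_singleton_self _) _)

end TightClosure

namespace WeaklyFRegular

variable {p : ℕ} [Fact p.Prime] {T : Type*} [CommRing T]

theorem isReduced (hT : WeaklyFRegular p T) : IsReduced T := by
  refine ⟨fun x ⟨n, hn⟩ => ?_⟩
  have hx : x ∈ tightClosure p (⊥ : Ideal T) := by
    refine ⟨1, one_mem_primeComplement_s12, n, fun e he => ?_⟩
    rw [one_mul, pow_eq_zero_of_le (he.trans (Nat.lt_pow_self (Fact.out : p.Prime).one_lt).le) hn]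
    exact Ideal.zero_mem _
  simpa [hT ⊥] using hx

theorem exists_isIdempotentElem_mul_eq_zero [IsNoetherianRing T] (hT : WeaklyFRegular p T)
    (c : T) : ∃ f, IsIdempotentElem f ∧ c * f = 0 ∧ c + f ∈ primeComplement T := by
  have := hT.isReduced
  obtain ⟨x, hcx, hx⟩ := exists_mul_eq_zero_add_mem_primeComplement c
  have hc : c ∈ Ideal.span {c + x} := by
    rw [← SetLike.mem_coe, ← hT]
    exact mem_tightClosure_span_add p hcx hx
  obtain ⟨s, hs⟩ := Ideal.mem_span_singleton'.1 hc
  have hsx : s * x = 0 :=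
    IsReduced.eq_zero _ ⟨2, by linear_combination (s * x) * hs + (s - s ^ 2) * hcx⟩
  have hcs : c * (1 - s) = 0 := by linear_combination -hs + hsx
  have hmem (Q : Ideal T) (hQ : Q ∈ minimalPrimes T) :
      (c ∈ Q → s ∈ Q) ∧ (c ∉ Q → 1 - s ∈ Q) :=
    ⟨fun hcQ => (hQ.1.1.mem_or_mem (hsx ▸ Q.zero_mem)).resolve_right
        fun hxQ => hx Q hQ (Q.add_mem hcQ hxQ),
      fun hcQ => (hQ.1.1.mem_or_mem (hcs ▸ Q.zero_mem)).resolve_left hcQ⟩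
  refine ⟨1 - s, ?_, hcs, fun Q hQ hcsQ => ?_⟩
  · have hss : s * (1 - s) = 0 := eq_zero_of_forall_mem_minimalPrimes fun Q hQ => by
      by_cases hcQ : c ∈ Q
      · exact Q.mul_mem_right _ ((hmem Q hQ).1 hcQ)
      · exact Q.mul_mem_left _ ((hmem Q hQ).2 hcQ)
    change (1 - s) * (1 - s) = 1 - s
    linear_combination -hss
  · by_cases hcQ : c ∈ Q
    · refine hQ.1.1.ne_top ((Ideal.eq_top_iff_one _).2 ?_)
      simpa using Q.add_mem ((hmem Q hQ).1 hcQ) (Q.sub_mem hcsQ hcQ)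
    · exact hcQ (by simpa using Q.sub_mem hcsQ ((hmem Q hQ).2 hcQ))

end WeaklyFRegular

theorem LinearMap.apply_mem_of_mem_map_algebraMap {A T : Type*} [CommSemiring A]
    [CommSemiring T] [Algebra A T] (φ : T →ₗ[A] A) {I : Ideal A} {x : T}
    (hx : x ∈ I.map (algebraMap A T)) :
    φ x ∈ I := by
  rw [← Submodule.restrictScalars_mem A, ← Ideal.smul_top_eq_map] at hx
  refine Submodule.smul_induction_on (p := fun x => φ x ∈ I) hx (fun a ha t _ => ?_)
    fun x y hx hy => by simpa only [map_add] using I.add_mem hx hy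
  simpa only [map_smul, smul_eq_mul] using I.mul_mem_right _ ha

theorem WeaklyFRegular.of_retraction {p : ℕ} [Fact p.Prime] {A T : Type*} [CommRing A]
    [CommRing T] [IsNoetherianRing T] [Algebra A T] (hT : WeaklyFRegular p T) (φ : T →ₗ[A] A)
    (hφ : ∀ a, φ (algebraMap A T a) = a) : WeaklyFRegular p A := by
  have := hT.isReduced
  have : IsReduced A :=
    isReduced_of_injective (algebraMap A T) (Function.LeftInverse.injective hφ)
  intro I
  refine Set.Subset.antisymm ?_ (subset_tightClosure p I)
  rintro z ⟨c, hc, N, hN⟩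
  obtain ⟨f, hf, hcf, hcf'⟩ := hT.exists_isIdempotentElem_mul_eq_zero (algebraMap A T c)
  set K := I.map (algebraMap A T) ⊔ Ideal.span {f}
  have hzK : algebraMap A T z ∈ K := by
    rw [← SetLike.mem_coe, ← hT K]
    refine ⟨_, hcf', N, fun e he => ?_⟩
    rw [add_mul, ← hf.pow_eq (pow_ne_zero e (Fact.out : p.Prime).ne_zero), ← mul_pow,
      ← map_pow, ← map_mul]
    refine Ideal.add_mem _ (Ideal.frobeniusPower_mono le_sup_left _ ?_)
      (Ideal.pow_mem_frobeniusPower_s12 (Ideal.mul_mem_right _ _ (Ideal.mem_sup_right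
        (Ideal.mem_span_singleton_self f))) _)
    exact Ideal.map_frobeniusPower_le_s12 _ I _ (Ideal.mem_map_of_mem _ (hN e he))
  obtain ⟨m, hm, v, hv, hmv⟩ := Submodule.mem_sup.1 hzK
  obtain ⟨t, rfl⟩ := Ideal.mem_span_singleton'.1 hv
  have htf : φ (t * f) = 0 := by
    refine (mul_right_mem_nonZeroDivisors_eq_zero_iff
      (primeComplement_subset_nonZeroDivisors hc)).1 ?_
    rw [mul_comm, ← smul_eq_mul, ← map_smul, Algebra.smul_def, mul_left_comm, hcf, mul_zero,
      map_zero]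
  rw [← hφ z, ← hmv, map_add, htf, add_zero]
  exact φ.apply_mem_of_mem_map_algebraMap hm

theorem exists_localization_retraction {R S : Type*} [CommSemiring R] [CommSemiring S]
    [Algebra R S] (φ : S →ₗ[R] R) (hφ : ∀ r, φ (algebraMap R S r) = r) (U : Submonoid R) :
    ∃ Φ : Localization (Algebra.algebraMapSubmonoid S U) →ₗ[Localization U] Localization U,
      ∀ x, Φ (algebraMap _ _ x) = x := by
  set Sᵤ := Localization (Algebra.algebraMapSubmonoid S U)
  set g := (IsScalarTower.toAlgHom R S Sᵤ).toLinearMap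
  set Φ := IsLocalizedModule.mapExtendScalars U g (Algebra.linearMap R (Localization U))
    (Localization U) φ
  have hΦ : Φ (g 1) = 1 := by
    rw [IsLocalizedModule.mapExtendScalars_apply_apply, IsLocalizedModule.map_apply,
      ← map_one (algebraMap R S), hφ, Algebra.linearMap_apply, map_one]
  have hΦ' : Φ ∘ₗ Algebra.linearMap (Localization U) Sᵤ = LinearMap.id :=
    LinearMap.ext_ring (by simpa [g] using hΦ)
  exact ⟨Φ, LinearMap.congr_fun hΦ'⟩

theorem fRegular_of_directSummand_general
    (p : ℕ) [Fact p.Prime] (R : Type) [CommRing R]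
    (S : Type) [CommRing S] [IsNoetherianRing S] [Algebra R S]
    (hsplit : ∃ φ : S →ₗ[R] R, ∀ r : R, φ (algebraMap R S r) = r)
    (hS : FRegular p S) :
    FRegular p R := by
  obtain ⟨φ, hφ⟩ := hsplit
  refine ⟨WeaklyFRegular.of_retraction hS.1 φ hφ, fun U => ?_⟩
  obtain ⟨Φ, hΦ⟩ := exists_localization_retraction φ hφ U
  exact WeaklyFRegular.of_retraction (hS.2 _) Φ hΦ

/-- A direct summand (as an `R`-module) of an F-regular ring is F-regular. -/
theorem fRegular_of_directSummand
    (p : ℕ) [Fact p.Prime] (R : Type) [CommRing R] [IsNoetherianRing R] [CharP R p]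
    (S : Type) [CommRing S] [IsNoetherianRing S] [CharP S p] [Algebra R S]
    (hinj : Function.Injective (algebraMap R S))
    (hsplit : ∃ φ : S →ₗ[R] R, ∀ r : R, φ (algebraMap R S r) = r)
    (hS : FRegular p S) :
    FRegular p R :=
  fRegular_of_directSummand_general p R S hsplit hS
end
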